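/- arXiv:1707.07154 — 6 statements merged into one kernel-verified Lean document; each statement's English description precedes it below -/
import Mathlib

section
/- (Legendre, 1798) Let x be an irrational real number with convergents p_n/q_n. If p ∈ ℤ and q ∈ ℕ, q ≥ 1, are coprime and satisfy |x − p/q| < 1/(2q²), then there exists n ≥ 0 such that p = p_n and q = q_n, where n is the unique index with q_n ≤ q < q_{n+1}. -/
/-!
Let `e_n = q_n x - p_n`. The complete quotients satisfy `x_{n+1} e_{n+1} + e_n = 0`, so consecutive
errors have opposite signs. Consecutive convergents have determinant `±1`, so every `(q', p')` with
`1 ≤ q' < q_{n+1}` is an integer combination of `(q_n, p_n)` and `(q_{n+1}, p_{n+1})`, and the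
coefficients have opposite signs; hence the two terms of `q' x - p'` have the same sign and
`|e_n| ≤ |q' x - p'|`. Now choose `n` with `q_n ≤ q < q_{n+1}`. Then
`|p q_n - p_n q| ≤ q |e_n| + q_n |q x - p| ≤ 2 q |q x - p| < 1`, so `p q_n = p_n q`, and coprimality
together with `q_n ≤ q` forces `q = q_n`, `p = p_n`.
-/

/-- The complete quotients of a real number `x`:
`cq x 0 = x` and `cq x (n+1) = 1 / (cq x n - ⌊cq x n⌋)`. -/
noncomputable def cq (x : ℝ) : ℕ → ℝ
  | 0 => x
  | n + 1 => (Int.fract (cq x n))⁻¹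

/-- The partial quotients of a real number `x`: `pq x n = ⌊cq x n⌋`. -/
noncomputable def pq (x : ℝ) (n : ℕ) : ℤ := ⌊cq x n⌋

lemma abs_le_abs_add_of_mul_nonneg {u v : ℝ} (h : 0 ≤ u * v) : |u| ≤ |u + v| := by
  have hsum : |u + v| = |u| + |v| := by
    rw [abs_add_eq_add_abs_iff]
    rcases mul_nonneg_iff.mp h with ⟨hu, hv⟩ | ⟨hu, hv⟩
    · exact Or.inl ⟨hu, hv⟩
    · exact Or.inr ⟨hu, hv⟩
  rw [hsum]
  exact le_add_of_nonneg_right (abs_nonneg v)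

lemma cq_eq_pq_add_inv (x : ℝ) (n : ℕ) : cq x n = pq x n + (cq x (n + 1))⁻¹ := by
  rw [cq, inv_inv, pq, Int.fract, add_sub_cancel]

section CompleteQuotients

variable {x : ℝ}

lemma irrational_cq (hx : Irrational x) : ∀ n, Irrational (cq x n)
  | 0 => hx
  | n + 1 => ((irrational_cq hx n).sub_intCast ⌊cq x n⌋).inv

lemma one_lt_cq_succ (hx : Irrational x) (n : ℕ) : 1 < cq x (n + 1) := by
  have hfract : 0 < Int.fract (cq x n) :=
    Int.fract_pos.mpr ((irrational_cq hx n).ne_int ⌊cq x n⌋)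
  exact (one_lt_inv₀ hfract).mpr (Int.fract_lt_one _)

lemma one_le_pq_succ (hx : Irrational x) (n : ℕ) : 1 ≤ pq x (n + 1) :=
  Int.le_floor.mpr (by exact_mod_cast (one_lt_cq_succ hx n).le)

end CompleteQuotients

/-- `P (n + 2) / Q (n + 2)` is the `n`-th convergent of `[a 0; a 1, a 2, …]`. -/
structure IsConvergentSeq (a P Q : ℕ → ℤ) : Prop where
  num_zero : P 0 = 0
  num_one : P 1 = 1
  den_zero : Q 0 = 1
  den_one : Q 1 = 0
  num_succ_succ : ∀ n, P (n + 2) = a n * P (n + 1) + P n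
  den_succ_succ : ∀ n, Q (n + 2) = a n * Q (n + 1) + Q n

def approxErr (x : ℝ) (P Q : ℕ → ℤ) (n : ℕ) : ℝ := Q n * x - P n

namespace IsConvergentSeq

variable {a P Q : ℕ → ℤ}

theorem det (h : IsConvergentSeq a P Q) (n : ℕ) :
    P (n + 1) * Q n - P n * Q (n + 1) = (-1) ^ n := by
  induction n with
  | zero => simp [h.num_zero, h.num_one, h.den_zero, h.den_one]
  | succ n ih =>
    rw [h.num_succ_succ, h.den_succ_succ, pow_succ]
    linear_combination (-1 : ℤ) * ih

theorem exists_int_combination (h : IsConvergentSeq a P Q) (n : ℕ) (p' q' : ℤ) :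
    ∃ s t : ℤ, s * P n + t * P (n + 1) = p' ∧ s * Q n + t * Q (n + 1) = q' := by
  have hsq : ((-1 : ℤ) ^ n) ^ 2 = 1 := by rw [← pow_mul, mul_comm, pow_mul]; norm_num
  refine ⟨(-1) ^ n * (P (n + 1) * q' - Q (n + 1) * p'), (-1) ^ n * (Q n * p' - P n * q'), ?_, ?_⟩
  · linear_combination (-1) ^ n * p' * h.det n + p' * hsq
  · linear_combination (-1) ^ n * q' * h.det n + q' * hsq

theorem den_succ_nonneg_and_le (h : IsConvergentSeq a P Q) (ha : ∀ n, 1 ≤ a (n + 1)) (n : ℕ) :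
    0 ≤ Q (n + 1) ∧ Q (n + 1) ≤ Q (n + 2) := by
  induction n with
  | zero => simp [h.den_succ_succ 0, h.den_zero, h.den_one]
  | succ n ih =>
    obtain ⟨hnonneg, hle⟩ := ih
    refine ⟨hnonneg.trans hle, ?_⟩
    rw [h.den_succ_succ (n + 1)]
    nlinarith [ha n]

theorem den_nonneg (h : IsConvergentSeq a P Q) (ha : ∀ n, 1 ≤ a (n + 1)) : ∀ n, 0 ≤ Q n
  | 0 => by simp [h.den_zero]
  | n + 1 => (h.den_succ_nonneg_and_le ha n).1

theorem one_le_den (h : IsConvergentSeq a P Q) (ha : ∀ n, 1 ≤ a (n + 1)) (n : ℕ) :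
    1 ≤ Q (n + 2) := by
  have hmono : Monotone fun k ↦ Q (k + 1) :=
    monotone_nat_of_le_succ fun k ↦ (h.den_succ_nonneg_and_le ha k).2
  have hQ2 : Q 2 = 1 := by simp [h.den_succ_succ 0, h.den_zero, h.den_one]
  exact hQ2 ▸ hmono (Nat.le_add_left 1 n)

theorem lt_den (h : IsConvergentSeq a P Q) (ha : ∀ n, 1 ≤ a (n + 1)) (n : ℕ) :
    (n : ℤ) < Q (n + 3) := by
  induction n with
  | zero => exact h.one_le_den ha 1
  | succ n ih =>
    rw [h.den_succ_succ (n + 2)]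
    push_cast
    nlinarith [ha (n + 1), h.one_le_den ha n, h.one_le_den ha (n + 1)]

theorem exists_den_le_lt (h : IsConvergentSeq a P Q) (ha : ∀ n, 1 ≤ a (n + 1)) {q : ℤ}
    (hq : 1 ≤ q) : ∃ n, Q (n + 2) ≤ q ∧ q < Q (n + 3) := by
  classical
  have hex : ∃ n, q < Q (n + 3) := ⟨q.toNat, by have := h.lt_den ha q.toNat; omega⟩
  refine ⟨Nat.find hex, ?_, Nat.find_spec hex⟩
  rcases Nat.eq_zero_or_eq_succ_pred (Nat.find hex) with h0 | hsucc
  · simpa [h0, h.den_succ_succ 0, h.den_zero, h.den_one] using hq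
  · rw [hsucc]
    exact not_lt.mp (Nat.find_min hex (hsucc ▸ Nat.lt_succ_self _))

theorem approxErr_succ_succ (h : IsConvergentSeq a P Q) (x : ℝ) (n : ℕ) :
    approxErr x P Q (n + 2) = a n * approxErr x P Q (n + 1) + approxErr x P Q n := by
  simp only [approxErr, h.num_succ_succ, h.den_succ_succ]
  push_cast
  ring

variable {x : ℝ}

theorem cq_mul_approxErr_succ_add (h : IsConvergentSeq (pq x) P Q) (hx : Irrational x) (n : ℕ) :
    cq x n * approxErr x P Q (n + 1) + approxErr x P Q n = 0 := by
  induction n with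
  | zero => simp [cq, approxErr, h.num_zero, h.num_one, h.den_zero, h.den_one]
  | succ n ih =>
    have hω : cq x (n + 1) ≠ 0 := (zero_lt_one.trans (one_lt_cq_succ hx n)).ne'
    rw [cq_eq_pq_add_inv x n] at ih
    rw [h.approxErr_succ_succ x n]
    field_simp at ih ⊢
    linear_combination ih

theorem approxErr_succ_ne_zero (h : IsConvergentSeq (pq x) P Q) (hx : Irrational x) :
    ∀ n, approxErr x P Q (n + 1) ≠ 0
  | 0 => by simp [approxErr, h.num_one, h.den_one]
  | n + 1 => fun h0 ↦ h.approxErr_succ_ne_zero hx n <| by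
      simpa [h0] using h.cq_mul_approxErr_succ_add hx (n + 1)

theorem approxErr_succ_mul_succ_succ_neg (h : IsConvergentSeq (pq x) P Q) (hx : Irrational x)
    (n : ℕ) : approxErr x P Q (n + 1) * approxErr x P Q (n + 2) < 0 := by
  have hrel : approxErr x P Q (n + 1) = -(cq x (n + 1) * approxErr x P Q (n + 2)) :=
    eq_neg_of_add_eq_zero_right (h.cq_mul_approxErr_succ_add hx (n + 1))
  rw [hrel, neg_mul, mul_assoc, neg_lt_zero]
  exact mul_pos (zero_lt_one.trans (one_lt_cq_succ hx n))
    (mul_self_pos.mpr (h.approxErr_succ_ne_zero hx (n + 1)))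

theorem abs_approxErr_le (h : IsConvergentSeq (pq x) P Q) (hx : Irrational x) (n : ℕ)
    {p' q' : ℤ} (hq' : 1 ≤ q') (hlt : q' < Q (n + 3)) :
    |approxErr x P Q (n + 2)| ≤ |q' * x - p'| := by
  obtain ⟨s, t, hp, hq⟩ := h.exists_int_combination (n + 2) p' q'
  have hQ2 := h.den_nonneg (one_le_pq_succ hx) (n + 2)
  have hQ3 := h.one_le_den (one_le_pq_succ hx) (n + 1)
  have hs : s ≠ 0 := by
    rintro rfl
    rcases le_or_gt t 0 with ht | ht <;> nlinarith
  have hst : s * t ≤ 0 := by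
    by_contra! hpos
    rcases pos_and_pos_or_neg_and_neg_of_mul_pos hpos with ⟨hs, ht⟩ | ⟨hs, ht⟩ <;> nlinarith
  have hsame : 0 ≤ s * approxErr x P Q (n + 2) * (t * approxErr x P Q (n + 3)) := by
    have hst' : (s * t : ℝ) ≤ 0 := by exact_mod_cast hst
    nlinarith [h.approxErr_succ_mul_succ_succ_neg hx (n + 1)]
  have hcomb : (q' : ℝ) * x - p' = s * approxErr x P Q (n + 2) + t * approxErr x P Q (n + 3) := by
    rw [← hp, ← hq]
    simp only [approxErr]
    push_cast
    ring
  calc |approxErr x P Q (n + 2)| ≤ |s * approxErr x P Q (n + 2)| := by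
        rw [abs_mul]
        exact le_mul_of_one_le_left (abs_nonneg _) (by exact_mod_cast Int.one_le_abs hs)
    _ ≤ |s * approxErr x P Q (n + 2) + t * approxErr x P Q (n + 3)| :=
        abs_le_abs_add_of_mul_nonneg hsame
    _ = |q' * x - p'| := by rw [hcomb]

end IsConvergentSeq

theorem mul_eq_mul_of_abs_sub_le {x : ℝ} {p q p' q' : ℤ} (hq' : 0 ≤ q') (hle : q' ≤ q)
    (hbest : |q' * x - p'| ≤ |q * x - p|) (hsmall : 2 * q * |q * x - p| < 1) :
    p * q' = p' * q := by
  have hq'R : (0 : ℝ) ≤ q' := by exact_mod_cast hq'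
  have hleR : (q' : ℝ) ≤ q := by exact_mod_cast hle
  have hlt : |((p * q' - p' * q : ℤ) : ℝ)| < 1 :=
    calc |((p * q' - p' * q : ℤ) : ℝ)| = |q * (q' * x - p') - q' * (q * x - p)| := by
          push_cast
          ring_nf
      _ ≤ |q * (q' * x - p')| + |q' * (q * x - p)| := abs_sub _ _
      _ = q * |q' * x - p'| + q' * |q * x - p| := by
          rw [abs_mul, abs_mul, abs_of_nonneg hq'R, abs_of_nonneg (hq'R.trans hleR)]
      _ ≤ q * |q * x - p| + q * |q * x - p| := by gcongr; exact hq'R.trans hleR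
      _ < 1 := by linarith
  rw [← Int.cast_abs, ← Int.cast_one, Int.cast_lt, Int.abs_lt_one_iff] at hlt
  exact sub_eq_zero.mp hlt

theorem eq_of_mul_eq_mul_of_isCoprime {p q p' q' : ℤ} (hcop : IsCoprime p q) (hq' : 0 < q')
    (hle : q' ≤ q) (h : p * q' = p' * q) : p' = p ∧ q' = q := by
  have hdvd : q ∣ q' := hcop.symm.dvd_of_dvd_mul_left ⟨p', by rw [h, mul_comm]⟩
  obtain rfl : q' = q := le_antisymm hle (Int.le_of_dvd hq' hdvd)
  exact ⟨(mul_right_cancel₀ hq'.ne' h).symm, rfl⟩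

/-- Legendre, 1798.  `P (n+2)`, `Q (n+2)` are the numerator `p_n` and
denominator `q_n` of the `n`-th convergent of `x` (so `P 0 = p_{-2} = 0`, etc.). -/
theorem stmt1 (x : ℝ) (hx : Irrational x)
    (P Q : ℕ → ℤ)
    (hP0 : P 0 = 0) (hP1 : P 1 = 1) (hQ0 : Q 0 = 1) (hQ1 : Q 1 = 0)
    (hP : ∀ n, P (n + 2) = pq x n * P (n + 1) + P n)
    (hQ : ∀ n, Q (n + 2) = pq x n * Q (n + 1) + Q n)
    (p : ℤ) (q : ℕ) (hq : 1 ≤ q) (hcop : IsCoprime p (q : ℤ))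
    (happrox : |x - (p : ℝ) / (q : ℝ)| < 1 / (2 * (q : ℝ) ^ 2)) :
    ∃ n : ℕ, p = P (n + 2) ∧ (q : ℤ) = Q (n + 2) ∧
      Q (n + 2) ≤ (q : ℤ) ∧ (q : ℤ) < Q (n + 3) := by
  have hPQ : IsConvergentSeq (pq x) P Q := ⟨hP0, hP1, hQ0, hQ1, hP, hQ⟩
  have hqZ : (1 : ℤ) ≤ q := by exact_mod_cast hq
  have hqR : (0 : ℝ) < q := by exact_mod_cast hq
  have hsmall : 2 * ((q : ℤ) : ℝ) * |((q : ℤ) : ℝ) * x - p| < 1 := by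
    have hfactor : (q : ℝ) * x - p = q * (x - p / q) := by field_simp
    rw [Int.cast_natCast, hfactor, abs_mul, abs_of_pos hqR]
    calc 2 * q * (q * |x - p / q|) = 2 * q ^ 2 * |x - p / q| := by ring
      _ < 2 * q ^ 2 * (1 / (2 * q ^ 2)) := by gcongr
      _ = 1 := by field_simp
  obtain ⟨n, hlow, hhigh⟩ := hPQ.exists_den_le_lt (one_le_pq_succ hx) hqZ
  have hcross := mul_eq_mul_of_abs_sub_le (hPQ.den_nonneg (one_le_pq_succ hx) (n + 2)) hlow
    (hPQ.abs_approxErr_le hx n hqZ hhigh) hsmall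
  obtain ⟨hPp, hQq⟩ := eq_of_mul_eq_mul_of_isCoprime hcop
    (hPQ.one_le_den (one_le_pq_succ hx) n) hlow hcross
  exact ⟨n, hPp.symm, hQq.symm, hlow, hhigh⟩
end

section
/- Let d ≥ 2 be a squarefree integer and let x = r + t√d (r, t ∈ ℚ, t ≠ 0) be a reduced quadratic irrational, i.e. x > 1 and −1 < r − t√d < 0. Let (x_n) be the complete quotients and (a_n) the partial quotients of x. Then for every n ≥ 0, x_n is again a reduced quadratic irrational: writing x_n = r_n + t_n√d with r_n, t_n ∈ ℚ, one has x_n > 1 and −1 < r_n − t_n√d < 0; moreover a_n = ⌊−1/(r_{n+1} − t_{n+1}√d)⌋ for every n ≥ 0. -/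
/-- the complete quotients of a reduced quadratic irrational are
reduced quadratic irrationals, and `a_n = ⌊-1/x_{n+1}*⌋`. -/
theorem stmt3 (d : ℕ) (hd2 : 2 ≤ d) (hdsf : Squarefree d)
    (r t : ℚ) (ht : t ≠ 0) (x : ℝ)
    (hx : x = (r : ℝ) + (t : ℝ) * Real.sqrt d)
    (hx1 : 1 < x)
    (hconj1 : -1 < (r : ℝ) - (t : ℝ) * Real.sqrt d)
    (hconj2 : (r : ℝ) - (t : ℝ) * Real.sqrt d < 0) :
    ∃ rs ts : ℕ → ℚ, rs 0 = r ∧ ts 0 = t ∧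
      (∀ n, ts n ≠ 0 ∧
        cq x n = (rs n : ℝ) + (ts n : ℝ) * Real.sqrt d ∧
        1 < cq x n ∧
        -1 < (rs n : ℝ) - (ts n : ℝ) * Real.sqrt d ∧
        (rs n : ℝ) - (ts n : ℝ) * Real.sqrt d < 0) ∧
      (∀ n, pq x n = ⌊-1 / ((rs (n + 1) : ℝ) - (ts (n + 1) : ℝ) * Real.sqrt d)⌋) := by
  set s : ℝ := Real.sqrt d with hs
  have hs2 : s ^ 2 = (d : ℝ) := Real.sq_sqrt (by positivity)
  have hirr : Irrational s := by
    rw [hs, irrational_sqrt_natCast_iff]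
    intro ⟨k, hk⟩
    have : k * k ∣ d := hk ▸ dvd_rfl
    have hk1 : k = 1 := Nat.isUnit_iff.1 (hdsf k this)
    rw [hk1] at hk
    omega
  have hne : ∀ p q : ℚ, q ≠ 0 → (p : ℝ) + (q : ℝ) * s ≠ 0 := by
    intro p q hq h
    apply hirr
    refine ⟨-(p / q), ?_⟩
    have hq' : (q : ℝ) ≠ 0 := by exact_mod_cast hq
    push_cast
    field_simp
    linarith [h]
  have hNne : ∀ p q : ℚ, q ≠ 0 → p ^ 2 - q ^ 2 * d ≠ 0 := by
    intro p q hq h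
    have h' : ((p : ℝ) + q * s) * ((p : ℝ) - q * s) = 0 := by
      have : ((p : ℝ) ^ 2 - (q : ℝ) ^ 2 * d) = 0 := by exact_mod_cast h
      nlinarith [hs2]
    rcases mul_eq_zero.1 h' with h1 | h1
    · exact hne p q hq h1
    · apply hne p (-q) (neg_ne_zero.2 hq); push_cast; linarith
  -- the sequence
  let F : ℕ → ℚ × ℚ := fun n => Nat.rec (r, t)
    (fun n p => ((p.1 - pq x n) / ((p.1 - pq x n) ^ 2 - p.2 ^ 2 * d),
                 -p.2 / ((p.1 - pq x n) ^ 2 - p.2 ^ 2 * d))) n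
  refine ⟨fun n => (F n).1, fun n => (F n).2, rfl, rfl, ?_⟩
  set rs : ℕ → ℚ := fun n => (F n).1 with hrs
  set ts : ℕ → ℚ := fun n => (F n).2 with hts
  have hF : ∀ n, rs (n + 1) = (rs n - pq x n) / ((rs n - pq x n) ^ 2 - ts n ^ 2 * d) ∧
      ts (n + 1) = -ts n / ((rs n - pq x n) ^ 2 - ts n ^ 2 * d) := fun n => ⟨rfl, rfl⟩
  -- invariant
  have key : ∀ n, (ts n ≠ 0 ∧
        cq x n = (rs n : ℝ) + (ts n : ℝ) * s ∧
        1 < cq x n ∧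
        -1 < (rs n : ℝ) - (ts n : ℝ) * s ∧
        (rs n : ℝ) - (ts n : ℝ) * s < 0) ∧
      (rs (n + 1) : ℝ) - (ts (n + 1) : ℝ) * s
        = ((rs n : ℝ) - (ts n : ℝ) * s - (pq x n : ℝ))⁻¹ := by
    have step : ∀ n, (ts n ≠ 0 ∧
        cq x n = (rs n : ℝ) + (ts n : ℝ) * s ∧
        1 < cq x n ∧
        -1 < (rs n : ℝ) - (ts n : ℝ) * s ∧
        (rs n : ℝ) - (ts n : ℝ) * s < 0) →
        ((ts (n + 1) ≠ 0 ∧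
        cq x (n + 1) = (rs (n + 1) : ℝ) + (ts (n + 1) : ℝ) * s ∧
        1 < cq x (n + 1) ∧
        -1 < (rs (n + 1) : ℝ) - (ts (n + 1) : ℝ) * s ∧
        (rs (n + 1) : ℝ) - (ts (n + 1) : ℝ) * s < 0) ∧
        (rs (n + 1) : ℝ) - (ts (n + 1) : ℝ) * s
          = ((rs n : ℝ) - (ts n : ℝ) * s - (pq x n : ℝ))⁻¹) := by
      rintro n ⟨htn, hcqn, hcq1, hc1, hc2⟩
      obtain ⟨hr1, ht1⟩ := hF n
      set a : ℤ := pq x n with ha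
      set p : ℚ := rs n - a with hp
      set q : ℚ := ts n with hq
      set N : ℚ := p ^ 2 - q ^ 2 * d with hN
      have hNne' : N ≠ 0 := hNne p q htn
      have hNR : (N : ℝ) ≠ 0 := by exact_mod_cast hNne'
      have ha1 : 1 ≤ a := by
        rw [ha]; exact Int.le_floor.2 (by exact_mod_cast hcq1.le)
      have hfr : Int.fract (cq x n) = (p : ℝ) + (q : ℝ) * s := by
        rw [Int.fract, show (⌊cq x n⌋ : ℤ) = a from rfl, hcqn, hp]; push_cast; ring
      have hfrne : Int.fract (cq x n) ≠ 0 := hfr ▸ hne p q htn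
      have hfrpos : 0 < Int.fract (cq x n) := (Int.fract_nonneg _).lt_of_ne (Ne.symm hfrne)
      have hfrlt : Int.fract (cq x n) < 1 := Int.fract_lt_one _
      have hcqs : cq x (n + 1) = (Int.fract (cq x n))⁻¹ := rfl
      have hNprod : ((p : ℝ) + q * s) * ((p : ℝ) - q * s) = (N : ℝ) := by
        push_cast [hN]; nlinarith [hs2]
      have hinv : cq x (n + 1) = (rs (n + 1) : ℝ) + (ts (n + 1) : ℝ) * s := by
        rw [hcqs, hfr, hr1, ht1]
        push_cast
        refine inv_eq_of_mul_eq_one_right ?_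
        field_simp
        linear_combination hNprod
      have hcq1' : 1 < cq x (n + 1) := by
        rw [hcqs]; exact one_lt_inv_iff₀.2 ⟨hfrpos, hfrlt⟩
      have hconjrel : (rs (n + 1) : ℝ) - (ts (n + 1) : ℝ) * s = ((p : ℝ) - q * s)⁻¹ := by
        have hpqs : (p : ℝ) - q * s ≠ 0 := by
          have := hne p (-q) (neg_ne_zero.2 htn); push_cast at this; intro h; apply this; linarith
        rw [hr1, ht1]
        push_cast
        refine (inv_eq_of_mul_eq_one_right ?_).symm
        field_simp
        linear_combination hNprod
      have hpqlt : (p : ℝ) - q * s < -1 := by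
        have : (p : ℝ) - q * s = ((rs n : ℝ) - (ts n : ℝ) * s) - a := by
          rw [hp]; push_cast; ring
        rw [this]
        have : (1 : ℝ) ≤ (a : ℝ) := by exact_mod_cast ha1
        linarith
      have hpqneg : (p : ℝ) - q * s < 0 := by linarith
      have hc1' : -1 < (rs (n + 1) : ℝ) - (ts (n + 1) : ℝ) * s := by
        rw [hconjrel]
        have h1 : (1 : ℝ) < -((p : ℝ) - q * s) := by linarith
        have := inv_lt_one_of_one_lt₀ h1
        rw [inv_neg] at this
        linarith
      have hc2' : (rs (n + 1) : ℝ) - (ts (n + 1) : ℝ) * s < 0 := by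
        rw [hconjrel]; exact inv_neg''.2 hpqneg
      have htn1 : ts (n + 1) ≠ 0 := by
        rw [ht1]; exact div_ne_zero (neg_ne_zero.2 htn) hNne'
      refine ⟨⟨htn1, hinv, hcq1', hc1', hc2'⟩, ?_⟩
      rw [hconjrel]
      congr 1
      rw [hp]; push_cast; ring
    intro n
    induction n with
    | zero =>
        have h0 : ts 0 ≠ 0 ∧ cq x 0 = (rs 0 : ℝ) + (ts 0 : ℝ) * s ∧ 1 < cq x 0 ∧
            -1 < (rs 0 : ℝ) - (ts 0 : ℝ) * s ∧ (rs 0 : ℝ) - (ts 0 : ℝ) * s < 0 :=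
          ⟨ht, hx, hx1, hconj1, hconj2⟩
        exact ⟨h0, (step 0 h0).2⟩
    | succ n ih => exact ⟨(step n ih.1).1, (step (n + 1) (step n ih.1).1).2⟩
  refine ⟨fun n => (key n).1, fun n => ?_⟩
  obtain ⟨⟨htn, hcqn, hcq1, hc1, hc2⟩, hrel⟩ := key n
  set a : ℤ := pq x n with ha
  set y : ℝ := (rs n : ℝ) - (ts n : ℝ) * s with hy
  have hlt : y - a < -1 := by
    have ha1 : 1 ≤ a := Int.le_floor.2 (by exact_mod_cast hcq1.le)
    have : (1 : ℝ) ≤ (a : ℝ) := by exact_mod_cast ha1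
    linarith
  have hne0 : y - (a : ℝ) ≠ 0 := by linarith
  have hval : -1 / ((rs (n + 1) : ℝ) - (ts (n + 1) : ℝ) * s) = (a : ℝ) - y := by
    rw [hrel, div_eq_mul_inv, inv_inv]; ring
  rw [hval]
  have : (a : ℝ) - y = -y + (a : ℝ) := by ring
  rw [this, Int.floor_add_intCast, Int.floor_eq_zero_iff.2 ⟨by linarith, by linarith⟩, zero_add]
end

section
/- Let d be a natural number that is not a perfect square, with p_n/q_n the convergents of √d and (v_n) the associated integer sequence (defined by the recurrence u_0 = ⌊√d⌋, v_0 = 1, u_{n+1} = a'_n·v_n − u_n, v_{n+1} = (d − u_{n+1}²)/v_n). Then for every n ≥ 0, p_{n−1}² − d·q_{n−1}² = (−1)^n·v_n. -/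
/-- `p_{n-1}² - d·q_{n-1}² = (-1)ⁿ·vₙ`.  Here `P (n+2) = p_n`,
`Q (n+2) = q_n` (so `p_{n-1} = P (n+1)`), `a n = pq √d n`, `a'_0 = 2a_0`,
`a'_n = a_n` for `n ≥ 1`, and `(u_n)`, `(v_n)` satisfy the recurrence
`u_{n+1} = a'_n v_n - u_n`, `v_n v_{n+1} = d - u_{n+1}²`. -/
theorem stmt8 (d : ℕ) (hd : ¬ IsSquare d)
    (a a' : ℕ → ℤ) (ha : ∀ n, a n = pq (Real.sqrt d) n)
    (ha'0 : a' 0 = 2 * a 0) (ha' : ∀ n, 1 ≤ n → a' n = a n)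
    (u v : ℕ → ℤ) (hu0 : u 0 = a 0) (hv0 : v 0 = 1)
    (hupos : ∀ n, 0 < u n) (hvpos : ∀ n, 0 < v n)
    (hu : ∀ n, u (n + 1) = a' n * v n - u n)
    (hv : ∀ n, v n * v (n + 1) = (d : ℤ) - (u (n + 1)) ^ 2)
    (P Q : ℕ → ℤ)
    (hP0 : P 0 = 0) (hP1 : P 1 = 1) (hQ0 : Q 0 = 1) (hQ1 : Q 1 = 0)
    (hP : ∀ n, P (n + 2) = a n * P (n + 1) + P n)
    (hQ : ∀ n, Q (n + 2) = a n * Q (n + 1) + Q n) :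
    ∀ n : ℕ, (P (n + 1)) ^ 2 - (d : ℤ) * (Q (n + 1)) ^ 2 = (-1) ^ n * v n := by
  -- determinant lemma: P(n+1) Q n - P n Q(n+1) = (-1)^n
  have hE : ∀ n : ℕ, P (n + 1) * Q n - P n * Q (n + 1) = (-1) ^ n := by
    intro n
    induction n with
    | zero => simp [hP0, hP1, hQ0, hQ1]
    | succ k ih =>
      rw [hP k, hQ k, pow_succ]
      linear_combination (-1 : ℤ) * ih
  have key : ∀ n : ℕ, ((P (n + 1)) ^ 2 - (d : ℤ) * (Q (n + 1)) ^ 2 = (-1) ^ n * v n) ∧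
      (P (n + 2) * P (n + 1) - (d : ℤ) * (Q (n + 2) * Q (n + 1)) = (-1) ^ n * u (n + 1)) := by
    intro n
    induction n with
    | zero =>
      have hu1 : u 1 = a 0 := by rw [hu 0, ha'0, hv0, hu0]; ring
      refine ⟨by simp [hP1, hQ1, hv0], ?_⟩
      rw [hP 0, hQ 0, hP0, hP1, hQ0, hQ1, hu1]; ring
    | succ k ih =>
      obtain ⟨hA, hB⟩ := ih
      have hvk : ((-1 : ℤ) ^ k * v k) ≠ 0 := by
        have := (hvpos k).ne'
        positivity
      have hsq : ((-1 : ℤ) ^ k) ^ 2 = 1 := by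
        rw [← pow_mul, mul_comm, pow_mul]; norm_num
      have hsq1 : ((-1 : ℤ) ^ (k + 1)) ^ 2 = 1 := by
        rw [← pow_mul, mul_comm, pow_mul]; norm_num
      have hE1 : P (k + 2) * Q (k + 1) - P (k + 1) * Q (k + 2) = (-1) ^ (k + 1) := hE (k + 1)
      -- Brahmagupta identity gives A k * A (k+1) = u(k+1)^2 - d
      have h2 : ((-1 : ℤ) ^ k * v k) * ((P (k + 2)) ^ 2 - (d : ℤ) * (Q (k + 2)) ^ 2)
          = (u (k + 1)) ^ 2 - d := by
        rw [← hA]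
        have hbr : ((P (k + 1)) ^ 2 - (d : ℤ) * (Q (k + 1)) ^ 2) *
            ((P (k + 2)) ^ 2 - (d : ℤ) * (Q (k + 2)) ^ 2)
            = (P (k + 2) * P (k + 1) - (d : ℤ) * (Q (k + 2) * Q (k + 1))) ^ 2
              - d * (P (k + 2) * Q (k + 1) - P (k + 1) * Q (k + 2)) ^ 2 := by ring
        rw [hbr, hB, hE1, mul_pow, hsq, hsq1]; ring
      have hAk1 : (P (k + 2)) ^ 2 - (d : ℤ) * (Q (k + 2)) ^ 2 = (-1) ^ (k + 1) * v (k + 1) := by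
        apply mul_left_cancel₀ hvk
        rw [h2]
        have := hv k
        rw [pow_succ]
        linear_combination this + v k * v (k + 1) * hsq
      refine ⟨hAk1, ?_⟩
      have hu2 : u (k + 2) = a (k + 1) * v (k + 1) - u (k + 1) := by
        rw [hu (k + 1), ha' (k + 1) (by omega)]
      rw [hP (k + 1), hQ (k + 1), hu2, pow_succ]
      linear_combination a (k + 1) * hAk1 + hB
  intro n
  exact (key n).1
end

section
/- Let d be a natural number that is not a perfect square, a_0 = ⌊√d⌋, (a_n) the partial quotients of √d, and T the minimal period of (a_n)_{n≥1}. Then T is the smallest index k ≥ 1 such that a_k = 2a_0. -/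
open Real

theorem cq_add (x : ℝ) (m n : ℕ) : cq (cq x m) n = cq x (m + n) := by
  induction n with
  | zero => rfl
  | succ n ih => exact congrArg (fun y => (Int.fract y)⁻¹) ih

theorem pq_cq (x : ℝ) (m n : ℕ) : pq (cq x m) n = pq x (m + n) := by
  rw [pq, pq, cq_add]

theorem Irrational.cq {x : ℝ} (hx : Irrational x) (n : ℕ) : Irrational (cq x n) := by
  induction n with
  | zero => exact hx
  | succ n ih => exact (ih.sub_intCast _).inv

theorem GenContFract.of_s_get?_eq_pq {x : ℝ} (hx : Irrational x) (n : ℕ) :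
    (GenContFract.of x).s.get? n = some ⟨1, (pq x (n + 1) : ℝ)⟩ := by
  induction n generalizing x with
  | zero => exact GenContFract.of_s_head (hx.sub_intCast _).ne_zero
  | succ n ih =>
    rw [GenContFract.of_s_succ]
    exact (ih (hx.cq 1)).trans (by rw [pq_cq, Nat.add_comm])

theorem eq_of_forall_pq_eq {x y : ℝ} (hx : Irrational x) (hy : Irrational y)
    (h : ∀ n, pq x n = pq y n) : x = y := by
  have hof : GenContFract.of x = GenContFract.of y := by
    ext1
    · rw [GenContFract.of_h_eq_floor, GenContFract.of_h_eq_floor]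
      exact congrArg _ (h 0)
    · exact Stream'.Seq.ext fun n => by
        rw [GenContFract.of_s_get?_eq_pq hx, GenContFract.of_s_get?_eq_pq hy, h]
  exact tendsto_nhds_unique (GenContFract.of_convergence x)
    (hof ▸ GenContFract.of_convergence y)

theorem pq_periodic_iff_cq_succ_eq_cq_one {x : ℝ} (hx : Irrational x) (k : ℕ) :
    (∀ n, 1 ≤ n → pq x (n + k) = pq x n) ↔ cq x (k + 1) = cq x 1 := by
  constructor
  · intro h
    refine eq_of_forall_pq_eq (hx.cq _) (hx.cq 1) fun n => ?_
    rw [pq_cq, pq_cq, show k + 1 + n = 1 + n + k by omega]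
    exact h _ (by omega)
  · intro h n hn
    obtain ⟨m, rfl⟩ : ∃ m, n = 1 + m := ⟨n - 1, by omega⟩
    rw [show 1 + m + k = k + 1 + m by omega, ← pq_cq, h, pq_cq]

/-- The classical reduced quadratic irrationals `ξ = (P + √d) / Q`: `ξ > 1` and the conjugate
`(P - √d) / Q` lies in `(-1, 0)`. -/
def IsReducedQuadratic (d : ℕ) (ξ : ℝ) : Prop :=
  1 < ξ ∧ ∃ P Q : ℤ, 0 < Q ∧ Q ∣ (d : ℤ) - P ^ 2 ∧ (P : ℝ) < √d ∧ √d - P < Q ∧ ξ = (P + √d) / Q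

theorem isReducedQuadratic_inv_fract {d : ℕ} {P Q : ℤ} (hQ : 0 < Q) (hdvd : Q ∣ (d : ℤ) - P ^ 2)
    (hP : (P : ℝ) < √d) (hξ : 1 ≤ (P + √d) / Q) (hfr : Int.fract ((P + √d) / Q) ≠ 0) :
    IsReducedQuadratic d (Int.fract ((P + √d) / Q))⁻¹ := by
  set ξ := (P + √d) / Q with hξdef
  set a := ⌊ξ⌋
  -- the classical recurrence `P' = a Q - P`, `Q Q' = d - P'²`
  set P' := a * Q - P
  obtain ⟨Q', hQQ'⟩ : Q ∣ (d : ℤ) - P' ^ 2 := by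
    have : (d : ℤ) - P' ^ 2 = (d - P ^ 2) + Q * (2 * a * P - a ^ 2 * Q) := by ring
    exact this ▸ dvd_add hdvd (dvd_mul_right _ _)
  have hs : √d ^ 2 = d := sq_sqrt d.cast_nonneg
  have hQr : (0 : ℝ) < Q := by exact_mod_cast hQ
  have ha : (1 : ℝ) ≤ a := by exact_mod_cast Int.le_floor.mpr (by exact_mod_cast hξ)
  have hfr_pos : 0 < Int.fract ξ := (Int.fract_nonneg ξ).lt_of_ne' hfr
  have hfrQ : Int.fract ξ * Q = √d - P' := by
    rw [Int.fract, hξdef]; push_cast [P']; field_simp; ring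
  have hP'lt : (P' : ℝ) < √d := by nlinarith
  have hQlt : (Q : ℝ) < √d + P' := by
    have : (Q : ℝ) ≤ a * Q := by nlinarith
    push_cast [P']; linarith
  have hQQ'r : (Q : ℝ) * Q' = (√d - P') * (√d + P') := by
    have := congrArg (fun z : ℤ => (z : ℝ)) hQQ'
    push_cast at this; nlinarith
  have hQ' : (0 : ℝ) < Q' := by
    have : (0 : ℝ) < Q * Q' := by rw [hQQ'r]; nlinarith
    exact pos_of_mul_pos_right this hQr.le
  refine ⟨one_lt_inv₀ hfr_pos |>.mpr (Int.fract_lt_one ξ), P', Q', by exact_mod_cast hQ',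
    ⟨Q, by rw [hQQ']; ring⟩, hP'lt, ?_, ?_⟩
  · nlinarith
  · rw [eq_div_iff hQ'.ne', inv_mul_eq_div, div_eq_iff hfr_pos.ne']
    nlinarith

theorem isReducedQuadratic_cq_sqrt {d : ℕ} (hd : ¬IsSquare d) (n : ℕ) :
    IsReducedQuadratic d (cq √d (n + 1)) := by
  have hx : Irrational √d := irrational_sqrt_natCast_iff.mpr hd
  induction n with
  | zero =>
    have h1 : (1 : ℝ) ≤ √d := by
      rw [one_le_sqrt]
      exact_mod_cast Nat.one_le_iff_ne_zero.mpr (by rintro rfl; exact hd ⟨0, rfl⟩)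
    have hfr : Int.fract √d ≠ 0 := (hx.sub_intCast _).ne_zero
    show IsReducedQuadratic d (Int.fract √d)⁻¹
    simpa using isReducedQuadratic_inv_fract (d := d) (P := 0) (Q := 1) one_pos (one_dvd _)
      (by rw [Int.cast_zero]; linarith) (by simpa using h1) (by simpa using hfr)
  | succ n ih =>
    obtain ⟨hξ1, P, Q, hQ, hdvd, hP, -, hξ⟩ := ih
    have hirr := hx.cq (n + 1)
    show IsReducedQuadratic d (Int.fract (cq √d (n + 1)))⁻¹
    rw [hξ] at hirr hξ1 ⊢
    exact isReducedQuadratic_inv_fract hQ hdvd hP hξ1.le (hirr.sub_intCast _).ne_zero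

namespace IsReducedQuadratic

variable {d : ℕ} {ξ : ℝ}

theorem eq_floor_add_of_fract_eq (h : IsReducedQuadratic d ξ) (hd : Irrational √d)
    (hfr : Int.fract ξ = Int.fract √d) : ξ = ⌊√d⌋ + √d := by
  obtain ⟨-, P, Q, hQ, -, hP, hP', hξ⟩ := h
  have hQr : (0 : ℝ) < Q := by exact_mod_cast hQ
  set m := ⌊ξ⌋ - ⌊√d⌋
  have hξm : ξ = m + √d := by
    have := Int.floor_add_fract ξ
    rw [hfr, ← Int.self_sub_floor] at this
    push_cast [m]; linarith
  -- `(Q - 1) √d` is an integer, so irrationality of `√d` forces `Q = 1`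
  have hQ1 : Q = 1 := by
    by_contra hne
    apply (hd.intCast_mul (sub_ne_zero.mpr hne)).ne_int (P - Q * m)
    rw [hξm, eq_div_iff hQr.ne'] at hξ
    push_cast; linarith
  subst hQ1
  have hPm : P = m := by
    rw [hξm, Int.cast_one, div_one] at hξ
    exact_mod_cast (add_right_cancel hξ).symm
  have hPfloor : ⌊√d⌋ = P := Int.floor_eq_iff.mpr ⟨hP.le, by push_cast at hP'; linarith⟩
  rw [hξm, ← hPm, hPfloor]

theorem eq_floor_add_of_floor_eq (h : IsReducedQuadratic d ξ) (hfl : ⌊ξ⌋ = 2 * ⌊√d⌋) :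
    ξ = ⌊√d⌋ + √d := by
  obtain ⟨hξ1, P, Q, hQ, -, hP, -, hξ⟩ := h
  have ha : 1 ≤ ⌊√d⌋ := by
    have : 1 ≤ ⌊ξ⌋ := Int.le_floor.mpr (by exact_mod_cast hξ1.le)
    omega
  have hPa : P ≤ ⌊√d⌋ := Int.le_floor.mpr hP.le
  have hξa : 2 * (⌊√d⌋ : ℝ) ≤ ξ := by exact_mod_cast hfl ▸ Int.floor_le ξ
  have hQr : (0 : ℝ) < Q := by exact_mod_cast hQ
  have hξQ : ξ * Q = P + √d := by rw [hξ]; field_simp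
  have hQ1 : Q = 1 := by
    by_contra hne
    have h2 : (2 : ℝ) ≤ Q := by exact_mod_cast (show 2 ≤ Q by omega)
    have : (P : ℝ) ≤ ⌊√d⌋ := by exact_mod_cast hPa
    have : (1 : ℝ) ≤ ⌊√d⌋ := by exact_mod_cast ha
    nlinarith [Int.lt_floor_add_one √d]
  subst hQ1
  rw [Int.cast_one, div_one] at hξ
  have : P = ⌊√d⌋ := by
    rw [hξ, Int.floor_intCast_add] at hfl
    omega
  rw [hξ, this]

end IsReducedQuadratic

/-- the minimal period `T` of the partial quotients of `√d`
(periodic from rank 1) is the smallest index `k ≥ 1` with `a_k = 2a_0`. -/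
theorem stmt9 (d : ℕ) (hd : ¬ IsSquare d)
    (T : ℕ) (hT : 1 ≤ T)
    (hper : ∀ n, 1 ≤ n → pq (Real.sqrt d) (n + T) = pq (Real.sqrt d) n)
    (hmin : ∀ T', 1 ≤ T' →
      (∀ n, 1 ≤ n → pq (Real.sqrt d) (n + T') = pq (Real.sqrt d) n) → T ≤ T') :
    pq (Real.sqrt d) T = 2 * pq (Real.sqrt d) 0 ∧
    ∀ k, 1 ≤ k → k < T → pq (Real.sqrt d) k ≠ 2 * pq (Real.sqrt d) 0 := by
  have hx : Irrational √d := irrational_sqrt_natCast_iff.mpr hd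
  have hred (k : ℕ) (hk : 1 ≤ k) : IsReducedQuadratic d (cq √d k) := by
    simpa [Nat.sub_add_cancel hk] using isReducedQuadratic_cq_sqrt hd (k - 1)
  constructor
  · have hfr : Int.fract (cq √d T) = Int.fract √d :=
      inv_injective ((pq_periodic_iff_cq_succ_eq_cq_one hx T).mp hper)
    rw [pq, (hred T hT).eq_floor_add_of_fract_eq hx hfr, Int.floor_intCast_add, two_mul]
    rfl
  · intro k hk hkT hak
    have hcq := (hred k hk).eq_floor_add_of_floor_eq hak
    have hk1 : cq √d (k + 1) = cq √d 1 := by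
      show (Int.fract (cq √d k))⁻¹ = (Int.fract √d)⁻¹
      rw [hcq, Int.fract_intCast_add]
    exact hkT.not_ge (hmin k hk ((pq_periodic_iff_cq_succ_eq_cq_one hx k).mpr hk1))
end

section
/- Let d be a natural number that is not a perfect square, T the minimal period of the continued fraction expansion of √d, and (u_n), (v_n) the associated integer sequences. If there exists an integer N with 1 ≤ N ≤ T−1 such that v_N divides u_N, then T = 2N; in particular T is even. -/
theorem cq_succ_eq_of_eq_intCast_add {x : ℝ} {m n : ℕ} {k : ℤ} (h : cq x m = k + cq x n) :
    cq x (m + 1) = cq x (n + 1) := by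
  simp only [cq, h, Int.fract_intCast_add]

theorem cq_add_eq_of_cq_add_eq {x : ℝ} {m p : ℕ} (h : cq x (m + p) = cq x m) :
    ∀ n, m ≤ n → cq x (n + p) = cq x n := by
  intro n hn
  induction n, hn using Nat.le_induction with
  | base => exact h
  | succ n _ ih => rw [Nat.add_right_comm, cq, ih, cq]

theorem add_sub_period {α : Type*} {f : ℕ → α} {m p q : ℕ}
    (hp : ∀ n, m ≤ n → f (n + p) = f n) (hq : ∀ n, m ≤ n → f (n + q) = f n) (hqp : q ≤ p) :
    ∀ n, m ≤ n → f (n + (p - q)) = f n := by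
  intro n hn
  rw [← hq _ (by omega), Nat.add_assoc, Nat.sub_add_cancel hqp, hp n hn]

theorem inv_div_sub_eq_div {s u₀ u₁ v₀ v₁ c : ℝ} (hu : u₁ = c * v₀ - u₀)
    (hv : v₀ * v₁ = s ^ 2 - u₁ ^ 2) (hs : s ≠ u₁) (hv₀ : v₀ ≠ 0) (hv₁ : v₁ ≠ 0) :
    ((u₀ + s) / v₀ - c)⁻¹ = (u₁ + s) / v₁ := by
  have hs' : s - u₁ ≠ 0 := sub_ne_zero.mpr hs
  rw [show (u₀ + s) / v₀ - c = (s - u₁) / v₀ by rw [hu]; field_simp; ring, inv_div,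
    div_eq_div_iff hs' hv₁]
  linear_combination hv

theorem floor_intCast_mul_sub_add_div {s u v : ℝ} (c : ℤ) (h₁ : u < s) (h₂ : s < u + v) :
    ⌊(c * v - u + s) / v⌋ = c := by
  have hv : 0 < v := by linarith
  rw [show (c * v - u + s) / v = c + (s - u) / v by field_simp; ring, Int.floor_intCast_add,
    Int.floor_eq_zero_iff.mpr ⟨by positivity, (div_lt_one hv).mpr (by linarith)⟩, add_zero]

structure IsSqrtCFSeq (d : ℕ) (a' u v : ℕ → ℤ) : Prop where
  a'_zero : a' 0 = 2 * pq √d 0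
  a'_eq : ∀ n, 1 ≤ n → a' n = pq √d n
  u_zero : u 0 = pq √d 0
  v_zero : v 0 = 1
  u_pos : ∀ n, 0 < u n
  v_pos : ∀ n, 0 < v n
  u_succ : ∀ n, u (n + 1) = a' n * v n - u n
  v_mul_v_succ : ∀ n, v n * v (n + 1) = d - u (n + 1) ^ 2

namespace IsSqrtCFSeq

variable {d : ℕ} {a' u v : ℕ → ℤ}

theorem u_one (h : IsSqrtCFSeq d a' u v) : u 1 = pq √d 0 := by
  rw [h.u_succ, h.a'_zero, h.v_zero, h.u_zero]
  ring

theorem a'_pos (h : IsSqrtCFSeq d a' u v) (n : ℕ) : 0 < a' n :=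
  pos_of_mul_pos_left (by linarith [h.u_succ n, h.u_pos n, h.u_pos (n + 1)]) (h.v_pos n).le

theorem v_mul_v_succ_real (h : IsSqrtCFSeq d a' u v) (n : ℕ) :
    (v n : ℝ) * v (n + 1) = √d ^ 2 - (u (n + 1) : ℝ) ^ 2 := by
  rw [Real.sq_sqrt (Nat.cast_nonneg d)]
  exact_mod_cast h.v_mul_v_succ n

theorem cq_succ (h : IsSqrtCFSeq d a' u v) (hd : Irrational √d) (n : ℕ) :
    cq √d (n + 1) = (u (n + 1) + √d) / v (n + 1) := by
  have hv (n : ℕ) : (v n : ℝ) ≠ 0 := by exact_mod_cast (h.v_pos n).ne'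
  have step (n : ℕ) (hn : Int.fract (cq √d n) = (u n + √d) / v n - a' n) :
      cq √d (n + 1) = (u (n + 1) + √d) / v (n + 1) := by
    rw [cq, hn]
    exact inv_div_sub_eq_div (by exact_mod_cast h.u_succ n) (h.v_mul_v_succ_real n)
      (hd.ne_int _) (hv n) (hv (n + 1))
  have hfract (n : ℕ) : Int.fract (cq √d n) = (u n + √d) / v n - a' n := by
    induction n with
    | zero =>
      rw [h.u_zero, h.v_zero, h.a'_zero, ← Int.self_sub_floor]
      simp only [cq, pq]
      push_cast
      ring
    | succ n ih =>
      rw [← Int.self_sub_floor, h.a'_eq (n + 1) (by omega), pq, step n ih]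
  exact step n (hfract n)

theorem floor_eq (h : IsSqrtCFSeq d a' u v) (hd : Irrational √d) (n : ℕ) :
    ⌊(u n + √d) / v n⌋ = a' n := by
  cases n with
  | zero =>
    rw [h.u_zero, h.v_zero, h.a'_zero, Int.cast_one, div_one, Int.floor_intCast_add]
    simp only [pq, cq]
    ring
  | succ n => rw [← h.cq_succ hd, h.a'_eq (n + 1) (by omega), pq]

theorem u_lt_sqrt (h : IsSqrtCFSeq d a' u v) (hd : Irrational √d) (n : ℕ) : (u n : ℝ) < √d := by
  cases n with
  | zero =>
    rw [h.u_zero]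
    exact (Int.floor_le _).lt_of_ne (hd.ne_int _).symm
  | succ n =>
    refine Real.lt_sqrt_of_sq_lt ?_
    have hvv := mul_pos (h.v_pos n) (h.v_pos (n + 1))
    have hsq : u (n + 1) ^ 2 < (d : ℤ) := by linarith [h.v_mul_v_succ n]
    exact_mod_cast hsq

theorem sqrt_lt_u_add_v (h : IsSqrtCFSeq d a' u v) (hd : Irrational √d) (n : ℕ) :
    √d < u n + v n := by
  cases n with
  | zero =>
    rw [h.u_zero, h.v_zero, Int.cast_one]
    exact Int.lt_floor_add_one _
  | succ n =>
    have hvn : (0 : ℝ) < v n := by exact_mod_cast h.v_pos n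
    have ha' : (1 : ℝ) ≤ a' n := by exact_mod_cast h.a'_pos n
    have hu : (u (n + 1) : ℝ) = a' n * v n - u n := by exact_mod_cast h.u_succ n
    have hlt := h.u_lt_sqrt hd
    have hv_lt : (v n : ℝ) < √d + u (n + 1) := by nlinarith [hlt n]
    have : v n * (√d - u (n + 1)) < v n * v (n + 1) := by
      rw [h.v_mul_v_succ_real n]
      nlinarith [hlt (n + 1)]
    linarith [lt_of_mul_lt_mul_left this hvn.le]

theorem a'_eq_of_u_succ (h : IsSqrtCFSeq d a' u v) (hd : Irrational √d) {m i : ℕ}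
    (hu : u m = u (i + 1)) (hv : v m = v i) : a' m = a' i := by
  rw [← h.floor_eq hd, hu, hv, h.u_succ]
  push_cast
  exact floor_intCast_mul_sub_add_div _ (h.u_lt_sqrt hd i) (h.sqrt_lt_u_add_v hd i)

theorem u_succ_eq_of_dvd (h : IsSqrtCFSeq d a' u v) (hd : Irrational √d) {N : ℕ}
    (hdvd : v N ∣ u N) : u (N + 1) = u N := by
  obtain ⟨k, hk⟩ := hdvd
  have ha' : a' N = 2 * k := by
    rw [← h.floor_eq hd, show (u N : ℝ) = (2 * k : ℤ) * v N - u N by push_cast [hk]; ring]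
    exact floor_intCast_mul_sub_add_div _ (h.u_lt_sqrt hd N) (h.sqrt_lt_u_add_v hd N)
  rw [h.u_succ, ha', hk]
  ring

theorem reflect (h : IsSqrtCFSeq d a' u v) (hd : Irrational √d) {N : ℕ}
    (hN : u (N + 1) = u N) : ∀ j i, i + j = N → v (N + j) = v i ∧ u (N + j + 1) = u i := by
  intro j
  induction j with
  | zero => rintro i rfl; exact ⟨rfl, hN⟩
  | succ j ih =>
    intro i hij
    obtain ⟨hv, hu⟩ := ih (i + 1) (by omega)
    have hv' : v (N + j + 1) = v i := by
      have := h.v_mul_v_succ i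
      rw [← hu, ← hv, ← h.v_mul_v_succ (N + j), mul_comm] at this
      exact (mul_left_cancel₀ (h.v_pos _).ne' this).symm
    have ha' : a' (N + j + 1) = a' i := h.a'_eq_of_u_succ hd hu hv'
    refine ⟨hv', ?_⟩
    rw [← Nat.add_assoc, h.u_succ, ha', hv', hu, h.u_succ]
    ring

theorem cq_two_mul (h : IsSqrtCFSeq d a' u v) (hd : Irrational √d) {N : ℕ} (hN1 : 1 ≤ N)
    (hdvd : v N ∣ u N) : cq √d (2 * N) = pq √d 0 + cq √d 0 := by
  have hrefl := h.reflect hd (h.u_succ_eq_of_dvd hd hdvd)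
  obtain ⟨M, rfl⟩ : ∃ M, N = M + 1 := ⟨N - 1, by omega⟩
  have hv : v (2 * (M + 1)) = 1 := by
    rw [← h.v_zero, ← (hrefl (M + 1) 0 (by omega)).1]
    ring_nf
  have hu : u (2 * (M + 1)) = pq √d 0 := by
    rw [← h.u_one, ← (hrefl M 1 (by omega)).2]
    ring_nf
  have h2 : 2 * (M + 1) = 2 * M + 1 + 1 := by ring
  rw [h2, h.cq_succ hd, ← h2, hu, hv, Int.cast_one, div_one, cq]

theorem pq_add_two_mul (h : IsSqrtCFSeq d a' u v) (hd : Irrational √d) {N : ℕ} (hN1 : 1 ≤ N)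
    (hdvd : v N ∣ u N) : ∀ n, 1 ≤ n → pq √d (n + 2 * N) = pq √d n := by
  intro n hn
  have h1 : cq √d (1 + 2 * N) = cq √d 1 := by
    rw [Nat.add_comm]
    exact cq_succ_eq_of_eq_intCast_add (h.cq_two_mul hd hN1 hdvd)
  simp only [pq, cq_add_eq_of_cq_add_eq h1 n hn]

end IsSqrtCFSeq

theorem stmt10_general (d : ℕ) (hd : ¬ IsSquare d)
    (a a' : ℕ → ℤ) (ha : ∀ n, a n = pq (Real.sqrt d) n)
    (ha'0 : a' 0 = 2 * a 0) (ha' : ∀ n, 1 ≤ n → a' n = a n)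
    (u v : ℕ → ℤ) (hu0 : u 0 = a 0) (hv0 : v 0 = 1)
    (hupos : ∀ n, 0 < u n) (hvpos : ∀ n, 0 < v n)
    (hu : ∀ n, u (n + 1) = a' n * v n - u n)
    (hv : ∀ n, v n * v (n + 1) = (d : ℤ) - (u (n + 1)) ^ 2)
    (T : ℕ)
    (hper : ∀ n, 1 ≤ n → pq (Real.sqrt d) (n + T) = pq (Real.sqrt d) n)
    (hmin : ∀ T', 1 ≤ T' →
      (∀ n, 1 ≤ n → pq (Real.sqrt d) (n + T') = pq (Real.sqrt d) n) → T ≤ T')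
    (N : ℕ) (hN1 : 1 ≤ N) (hNT : N ≤ T - 1) (hdvd : v N ∣ u N) :
    T = 2 * N ∧ Even T := by
  obtain rfl : a = pq √d := funext ha
  have hseq : IsSqrtCFSeq d a' u v := ⟨ha'0, ha', hu0, hv0, hupos, hvpos, hu, hv⟩
  have hper2N := hseq.pq_add_two_mul (irrational_sqrt_natCast_iff.mpr hd) hN1 hdvd
  have hle : T ≤ 2 * N := hmin _ (by omega) hper2N
  have hge : 2 * N ≤ T := by
    by_contra hlt
    have := hmin (2 * N - T) (by omega) (add_sub_period hper2N hper (by omega))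
    omega
  have hT : T = 2 * N := by omega
  exact ⟨hT, hT ▸ even_two_mul N⟩

/-- if `v_N ∣ u_N` for some `1 ≤ N ≤ T-1`, then `T = 2N`;
in particular `T` is even. -/
theorem stmt10 (d : ℕ) (hd : ¬ IsSquare d)
    (a a' : ℕ → ℤ) (ha : ∀ n, a n = pq (Real.sqrt d) n)
    (ha'0 : a' 0 = 2 * a 0) (ha' : ∀ n, 1 ≤ n → a' n = a n)
    (u v : ℕ → ℤ) (hu0 : u 0 = a 0) (hv0 : v 0 = 1)
    (hupos : ∀ n, 0 < u n) (hvpos : ∀ n, 0 < v n)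
    (hu : ∀ n, u (n + 1) = a' n * v n - u n)
    (hv : ∀ n, v n * v (n + 1) = (d : ℤ) - (u (n + 1)) ^ 2)
    (T : ℕ) (hT : 1 ≤ T)
    (hper : ∀ n, 1 ≤ n → pq (Real.sqrt d) (n + T) = pq (Real.sqrt d) n)
    (hmin : ∀ T', 1 ≤ T' →
      (∀ n, 1 ≤ n → pq (Real.sqrt d) (n + T') = pq (Real.sqrt d) n) → T ≤ T')
    (N : ℕ) (hN1 : 1 ≤ N) (hNT : N ≤ T - 1) (hdvd : v N ∣ u N) :
    T = 2 * N ∧ Even T :=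
  stmt10_general d hd a a' ha ha'0 ha' u v hu0 hv0 hupos hvpos hu hv T hper hmin N hN1 hNT hdvd
end

section
/- Let d be a natural number that is not a perfect square and m a nonzero integer with |m| < √d. If there exists at least one pair (x, y) of positive coprime natural numbers with x² − d·y² = m, then the set of all pairs (x, y) ∈ ℕ² with x² − d·y² = m is infinite. -/
/-- if `x² - d·y² = m` (`d` not a square, `0 < |m| < √d`) has a
solution in coprime positive naturals, then it has infinitely many solutions
in natural numbers. -/
theorem stmt14 (d : ℕ) (hd : ¬ IsSquare d)
    (m : ℤ) (hm : m ≠ 0) (hmd : |(m : ℝ)| < Real.sqrt d)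
    (hsol : ∃ x y : ℕ, 0 < x ∧ 0 < y ∧ Nat.Coprime x y ∧
      (x : ℤ) ^ 2 - (d : ℤ) * (y : ℤ) ^ 2 = m) :
    {p : ℕ × ℕ | (p.1 : ℤ) ^ 2 - (d : ℤ) * (p.2 : ℤ) ^ 2 = m}.Infinite := by
  obtain ⟨x₀, y₀, hx₀, hy₀, -, hsol₀⟩ := hsol
  have hd0 : 0 < d := by
    rcases Nat.eq_zero_or_pos d with h | h
    · exact absurd (h ▸ (⟨0, rfl⟩ : IsSquare (0 : ℕ))) hd
    · exact h
  have hdZ : ¬ IsSquare ((d : ℤ)) := by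
    rwa [Int.isSquare_natCast_iff]
  obtain ⟨a, hax, hay⟩ := Pell.Solution₁.exists_pos_of_not_isSquare
    (by exact_mod_cast hd0) hdZ
  set A : ℕ := a.x.toNat with hA
  set B : ℕ := a.y.toNat with hB
  have hAx : (A : ℤ) = a.x := Int.toNat_of_nonneg (by linarith)
  have hBy : (B : ℤ) = a.y := Int.toNat_of_nonneg hay.le
  have hA2' : (2 : ℤ) ≤ A := by rw [hAx]; exact hax
  have hA2 : 2 ≤ A := by exact_mod_cast hA2'
  have hB1 : 1 ≤ B := by
    have : (1 : ℤ) ≤ B := by rw [hBy]; exact hay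
    exact_mod_cast this
  have hPell : (A : ℤ) ^ 2 - (d : ℤ) * (B : ℤ) ^ 2 = 1 := by
    rw [hAx, hBy]; exact a.prop
  -- iteration map
  set f : ℕ × ℕ → ℕ × ℕ := fun p => (A * p.1 + d * B * p.2, B * p.1 + A * p.2) with hf
  set g : ℕ → ℕ × ℕ := fun n => f^[n] (x₀, y₀) with hg
  have key : ∀ n, ((g n).1 : ℤ) ^ 2 - (d : ℤ) * ((g n).2 : ℤ) ^ 2 = m
      ∧ 0 < (g n).1 ∧ 0 < (g n).2 := by
    intro n
    induction n with
    | zero => exact ⟨hsol₀, hx₀, hy₀⟩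
    | succ n ih =>
      obtain ⟨h1, h2, h3⟩ := ih
      have hgs : g (n + 1) = f (g n) := by
        simp [hg, Function.iterate_succ_apply']
      refine ⟨?_, ?_, ?_⟩
      · rw [hgs]
        simp only [hf]
        push_cast
        linear_combination ((((g n).1 : ℤ))^2 - (d:ℤ)*(((g n).2:ℤ))^2) * hPell + h1
      · rw [hgs]; simp only [hf]; positivity
      · rw [hgs]; simp only [hf]; positivity
  have hmono : StrictMono fun n => (g n).1 := by
    apply strictMono_nat_of_lt_succ
    intro n
    obtain ⟨-, h2, h3⟩ := key n
    have hgs : g (n + 1) = f (g n) := by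
      simp [hg, Function.iterate_succ_apply']
    rw [hgs]
    simp only [hf]
    have : 1 ≤ d * B * (g n).2 := Nat.one_le_iff_ne_zero.mpr (by positivity)
    nlinarith
  exact Set.infinite_of_injective_forall_mem (f := g)
    (fun i j hij => hmono.injective (congrArg Prod.fst hij)) (fun n => (key n).1)
end
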